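/- (Dual Murnaghan–Nakayama rule.) For every integer sequence α ∈ ℤ^m and every integer r > 0, M_{[r]}^⊥(𝔖_α) = Σ_{i=1}^{m} 𝔖_{α − r·e_i}, where α − r·e_i is the integer sequence obtained from α by subtracting r from its i-th entry. -/

import Mathlib

open scoped BigOperators

noncomputable section

/-- `NSym`: the free associative `ℚ`-algebra on noncommuting generators `H_1, H_2, …`. -/
abbrev NSym : Type := FreeAlgebra ℚ ℕ+

/-- `H n` for an integer `n`: the generator `H_n` for `n > 0`, with `H_0 = 1` and `H_n = 0`
for `n < 0`. -/
noncomputable def H (n : ℤ) : NSym :=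
  if h : 0 < n then FreeAlgebra.ι ℚ (⟨n.toNat, by omega⟩ : ℕ+)
  else if n = 0 then 1 else 0

/-- A composition: a list of positive integers. -/
def IsComp (α : List ℕ) : Prop := ∀ x ∈ α, 0 < x

/-- The immaculate function of an integer sequence `α`. -/
noncomputable def Imm (α : List ℤ) : NSym :=
  ∑ σ : Equiv.Perm (Fin α.length),
    (Equiv.Perm.sign σ : ℤ) •
      (List.ofFn fun i : Fin α.length =>
        H (α.get i + ((σ i : ℕ) : ℤ) - ((i : ℕ) : ℤ))).prod

/-- The set `D(α)` of proper partial sums of a composition. -/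
def Dset (α : List ℕ) : Set ℕ := {n | ∃ i, 0 < i ∧ i < α.length ∧ (α.take i).sum = n}

/-- The ribbon function `R_α`. -/
noncomputable def Ribbon (α : List ℕ) : NSym :=
  ∑ᶠ (β : List ℕ) (_ : IsComp β ∧ β.sum = α.sum ∧ Dset β ⊆ Dset α),
    (-1 : ℤ) ^ (α.length - β.length) • (β.map fun n => H (n : ℤ)).prod

/-- The noncommutative power sum `Ψ_k`. -/
noncomputable def Psi (k : ℕ) : NSym :=
  ∑ i ∈ Finset.range k, (-1 : ℤ) ^ i • Ribbon (List.replicate i 1 ++ [k - i])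

/-- `(i,j)` (0-indexed) is a cell of the skew diagram `γ/α`. -/
def Cell (α γ : List ℕ) (i j : ℕ) : Prop :=
  i < γ.length ∧ α.getD i 0 ≤ j ∧ j < γ.getD i 0

/-- An immaculate tableau of shape `γ/α`, encoded as a function which is zero off the
cells of `γ/α`, positive on the cells, weakly increasing along rows and strictly
increasing down the first column. -/
def IsImmTab (α γ : List ℕ) (f : ℕ → ℕ → ℕ) : Prop :=
  (∀ i j, Cell α γ i j → 0 < f i j) ∧
  (∀ i j, ¬ Cell α γ i j → f i j = 0) ∧
  (∀ i j j', Cell α γ i j → Cell α γ i j' → j ≤ j' → f i j ≤ f i j') ∧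
  (∀ i i', i < i' → Cell α γ i 0 → Cell α γ i' 0 → f i 0 < f i' 0)

/-- The number of cells of the filling `f` (of outer shape `γ`) containing the letter `k ≥ 1`. -/
def content (γ : List ℕ) (f : ℕ → ℕ → ℕ) (k : ℕ) : ℕ :=
  ((Finset.range γ.length ×ˢ Finset.range γ.sum).filter fun p => f p.1 p.2 = k).card

/-- The reading word of a filling of shape `γ/α`: each row right to left, top to bottom. -/
def readWord (α γ : List ℕ) (f : ℕ → ℕ → ℕ) : List ℕ :=
  (List.range γ.length).flatMap fun i =>
    ((List.range' (α.getD i 0) (γ.getD i 0 - α.getD i 0)).reverse).map (f i)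

/-- A word is Yamanouchi if every prefix has at least as many `j`'s as `j+1`'s, for all `j ≥ 1`. -/
def Yamanouchi (w : List ℕ) : Prop :=
  ∀ j k : ℕ, 0 < j → (w.take k).count (j + 1) ≤ (w.take k).count j

/-- `α ⊆ γ` componentwise. -/
def Contains (α γ : List ℕ) : Prop :=
  α.length ≤ γ.length ∧ ∀ i < α.length, α.getD i 0 ≤ γ.getD i 0

/-- The immaculate Littlewood–Richardson coefficient `C_{α,λ}^β`: the number of Yamanouchi
immaculate tableaux of shape `β/α` and content `λ`. -/
noncomputable def Ccoef (α lam β : List ℕ) : ℕ :=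
  Nat.card {f : ℕ → ℕ → ℕ //
    IsImmTab α β f ∧ (∀ k : ℕ, content β f (k + 1) = lam.getD k 0) ∧
    Yamanouchi (readWord α β f)}

/-- The axioms determining the operators `M_β^⊥` on `NSym`. -/
def MperpAxioms (Mp : List ℕ → NSym →ₗ[ℚ] NSym) : Prop :=
  Mp [] = LinearMap.id ∧
  (∀ β : List ℕ, IsComp β → β ≠ [] → Mp β 1 = 0) ∧
  (∀ b : ℕ, ∀ rest : List ℕ, 0 < b → IsComp rest → ∀ n : ℕ, 1 ≤ n → ∀ x : NSym,
    Mp (b :: rest) (H (n : ℤ) * x)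
      = H ((n : ℤ) - (b : ℤ)) * Mp rest x + H (n : ℤ) * Mp (b :: rest) x)

/-- The creation operator `𝔹_m`. -/
noncomputable def Bop (Mp : List ℕ → NSym →ₗ[ℚ] NSym) (m : ℤ) (x : NSym) : NSym :=
  ∑ᶠ i : ℕ, (-1 : ℤ) ^ i • (H (m + (i : ℤ)) * Mp (List.replicate i 1) x)


lemma H_zero : H 0 = 1 := by simp [H]

lemma H_of_neg {n : ℤ} (h : n < 0) : H n = 0 := by
  rw [H, dif_neg (by omega), if_neg (by omega)]

lemma Mp_single (Mp : List ℕ → NSym →ₗ[ℚ] NSym) (hMp : MperpAxioms Mp) (r : ℕ) (hr : 0 < r) :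
    ∀ L : List ℤ, Mp [r] ((L.map H).prod) =
      ∑ j ∈ Finset.range L.length,
        ((L.take j).map H).prod * (H (L.getD j 0 - r) * ((L.drop (j+1)).map H).prod)
  | [] => by
    simpa using hMp.2.1 [r] (by intro x hx; simp at hx; omega) (by simp)
  | c :: L => by
    have IH := Mp_single Mp hMp r hr L
    rw [List.length_cons, Finset.sum_range_succ']
    simp only [List.take_succ_cons, List.getD_cons_succ, List.drop_succ_cons, List.map_cons,
      List.prod_cons, List.take_zero, List.map_nil, List.prod_nil, List.getD_cons_zero,
      List.drop_one, List.tail_cons, one_mul, List.drop_zero]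
    rcases lt_trichotomy c 0 with hc | hc | hc
    · rw [H_of_neg hc, H_of_neg (by omega : c - (r:ℤ) < 0)]
      simp
    · subst hc
      rw [H_zero, H_of_neg (by omega : (0:ℤ) - (r:ℤ) < 0)]
      simp [IH, mul_assoc]
    · have hn : c = ((c.toNat : ℕ) : ℤ) := (Int.toNat_of_nonneg hc.le).symm
      rw [hn, hMp.2.2 r [] hr (by intro x hx; simp at hx) c.toNat (by omega) _, hMp.1]
      simp only [LinearMap.id_apply]
      rw [IH, Finset.mul_sum]
      simp only [mul_assoc]
      rw [add_comm]

lemma Imm_eq_sum (α : List ℤ) (m : ℕ) (h : α.length = m) :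
    Imm α = ∑ σ : Equiv.Perm (Fin m), (Equiv.Perm.sign σ : ℤ) •
      ((List.ofFn fun i : Fin m =>
        (α.getD i 0 + ((σ i : ℕ) : ℤ) - ((i : ℕ) : ℤ))).map H).prod := by
  subst h
  unfold Imm
  refine Finset.sum_congr rfl fun σ _ => ?_
  rw [List.map_ofFn]
  refine congrArg _ (congrArg List.prod (congrArg List.ofFn (funext fun i => ?_)))
  simp [List.getD_eq_getElem _ _ i.2]

/-- **Dual Murnaghan–Nakayama rule.** `M_{[r]}^⊥(𝔖_α) = Σ_{i=1}^m 𝔖_{α − r·e_i}`. -/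
theorem Mperp_dual_murnaghan_nakayama (Mp : List ℕ → NSym →ₗ[ℚ] NSym)
    (hMp : MperpAxioms Mp) (α : List ℤ) (r : ℕ) (hr : 0 < r) :
    Mp [r] (Imm α) =
      ∑ i ∈ Finset.range α.length, Imm (α.set i (α.getD i 0 - (r : ℤ))) := by
  set m := α.length with hm
  rw [Imm_eq_sum α m rfl, map_sum]
  simp only [map_zsmul, Mp_single Mp hMp r hr, List.length_ofFn, Finset.smul_sum]
  rw [Finset.sum_comm]
  refine Finset.sum_congr rfl fun j hj => ?_
  have hjm : j < m := Finset.mem_range.mp hj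
  rw [Imm_eq_sum _ m (by rw [List.length_set])]
  refine Finset.sum_congr rfl fun σ _ => ?_
  congr 1
  set L := List.ofFn fun i : Fin m => (α.getD i 0 + ((σ i : ℕ) : ℤ) - ((i : ℕ) : ℤ)) with hL
  have hLlen : L.length = m := List.length_ofFn
  have hkey : (List.ofFn fun i : Fin m =>
      ((α.set j (α.getD j 0 - (r:ℤ))).getD i 0 + ((σ i : ℕ) : ℤ) - ((i : ℕ) : ℤ)))
      = L.set j (L.getD j 0 - (r:ℤ)) := by
    apply List.ext_getElem
    · simp [hLlen]
    · intro i h1 h2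
      have him : i < m := by simpa using h1
      have hLget : ∀ k (hk : k < m), L[k]'(by omega) =
          (α.getD k 0 + ((σ ⟨k, hk⟩ : ℕ) : ℤ) - (k : ℤ)) := by
        intro k hk
        simp only [hL, List.getElem_ofFn]
      rw [List.getElem_ofFn, List.getElem_set]
      have hgd : L.getD j 0 = α.getD j 0 + ((σ ⟨j, hjm⟩ : ℕ) : ℤ) - (j : ℤ) := by
        rw [List.getD_eq_getElem _ _ (by omega), hLget j hjm]
      by_cases hij : j = i
      · subst hij
        rw [if_pos rfl, hgd]
        have : (α.set j (α.getD j 0 - (r:ℤ))).getD j 0 = α.getD j 0 - (r:ℤ) := by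
          rw [List.getD_eq_getElem _ _ (by rw [List.length_set]; omega), List.getElem_set,
            if_pos rfl]
        rw [this]
        ring
      · rw [if_neg hij, hLget i him]
        have : (α.set j (α.getD j 0 - (r:ℤ))).getD i 0 = α.getD i 0 := by
          by_cases hia : i < α.length
          · rw [List.getD_eq_getElem _ _ (by rw [List.length_set]; omega), List.getElem_set,
              if_neg hij, List.getD_eq_getElem _ _ hia]
          · rw [List.getD_eq_default _ _ (by rw [List.length_set]; omega),
              List.getD_eq_default _ _ (by omega)]
        rw [this]
  rw [hkey, List.set_eq_take_append_cons_drop, if_pos (by omega)]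
  simp [List.prod_append, mul_assoc]

end
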